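/- Let n ≥ 3 be an integer and let X₁, …, Xₙ be real numbers with X₁ + ⋯ + Xₙ = 0 and (X₁,…,Xₙ) ≠ (0,…,0). Then g₁(X₁,…,Xₙ) < 0; that is, the restriction of the quadratic form g₁ to the hyperplane { X : Σᵢ Xᵢ = 0 } is negative definite. -/

import Mathlib

open Finset

/-- The quadratic form `g₁(h₁,…,hₙ) = Σ_{1≤i<j≤n} hᵢhⱼ − (1/(n−1))·h₁·Σ_{j=2}^{n} hⱼ
− Σ_{j=2}^{n} hⱼ² + (1/(n−1))·Σ_{j=2}^{n} hⱼ²` (0-based: `h₁ = h 0`,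
`Σ_{j=2}^{n}` is the sum over indices `j` with `1 ≤ j`). -/
noncomputable def gOne (n : ℕ) (hn : 3 ≤ n) (h : Fin n → ℝ) : ℝ :=
  (∑ i : Fin n, ∑ j : Fin n, if i < j then h i * h j else 0)
    - (1 / ((n : ℝ) - 1)) * h ⟨0, by omega⟩ * (∑ j : Fin n, if 1 ≤ (j : ℕ) then h j else 0)
    - (∑ j : Fin n, if 1 ≤ (j : ℕ) then h j ^ 2 else 0)
    + (1 / ((n : ℝ) - 1)) * (∑ j : Fin n, if 1 ≤ (j : ℕ) then h j ^ 2 else 0)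

theorem stmt_9 (n : ℕ) (hn : 3 ≤ n) (X : Fin n → ℝ)
    (hsum : ∑ i, X i = 0) (hX : X ≠ 0) :
    gOne n hn X < 0 := by
  have hn0 : 0 < n := by omega
  set z : Fin n := ⟨0, by omega⟩ with hz
  set A : ℝ := X z with hA
  set S2 : ℝ := ∑ i, X i ^ 2 with hS2
  -- linear sum identity
  have hT : (∑ j : Fin n, if 1 ≤ (j : ℕ) then X j else 0) = -A := by
    have h1 : ∀ j : Fin n, (if 1 ≤ (j : ℕ) then X j else 0)
        = X j - (if j = z then X j else 0) := by
      intro j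
      by_cases hj : j = z
      · subst hj; simp [hz]
      · have : 1 ≤ (j : ℕ) := by
          rcases Nat.eq_zero_or_pos (j : ℕ) with h0 | h0
          · exact absurd (Fin.ext h0) hj
          · exact h0
        simp [this, hj]
    rw [Finset.sum_congr rfl fun j _ => h1 j, Finset.sum_sub_distrib,
      Finset.sum_ite_eq' univ z X, hsum]
    simp [hA]
  -- quadratic sum identity
  have hQ : (∑ j : Fin n, if 1 ≤ (j : ℕ) then X j ^ 2 else 0) = S2 - A ^ 2 := by
    have h1 : ∀ j : Fin n, (if 1 ≤ (j : ℕ) then X j ^ 2 else 0)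
        = X j ^ 2 - (if j = z then X j ^ 2 else 0) := by
      intro j
      by_cases hj : j = z
      · subst hj; simp [hz]
      · have : 1 ≤ (j : ℕ) := by
          rcases Nat.eq_zero_or_pos (j : ℕ) with h0 | h0
          · exact absurd (Fin.ext h0) hj
          · exact h0
        simp [this, hj]
    rw [Finset.sum_congr rfl fun j _ => h1 j, Finset.sum_sub_distrib,
      Finset.sum_ite_eq' univ z (fun j => X j ^ 2)]
    simp [hS2, hA]
  -- cross term identity
  have hcross : (∑ i : Fin n, ∑ j : Fin n, if i < j then X i * X j else 0) * 2
      = (∑ i, X i) ^ 2 - S2 := by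
    have key : ∀ i j : Fin n, X i * X j
        = (if i < j then X i * X j else 0) + (if j < i then X i * X j else 0)
          + (if i = j then X i * X j else 0) := by
      intro i j
      rcases lt_trichotomy i j with h | h | h
      · simp [h, not_lt.2 h.le, h.ne]
      · simp [h]
      · simp [h, not_lt.2 h.le, h.ne']
    have hsq : (∑ i, X i) ^ 2 = ∑ i : Fin n, ∑ j : Fin n, X i * X j := by
      rw [sq, Finset.sum_mul_sum]
    rw [hsq, Finset.sum_congr rfl fun i _ => Finset.sum_congr rfl fun j _ => key i j]
    have hswap : (∑ i : Fin n, ∑ j : Fin n, if j < i then X i * X j else 0)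
        = ∑ i : Fin n, ∑ j : Fin n, if i < j then X i * X j else 0 := by
      rw [Finset.sum_comm]
      exact Finset.sum_congr rfl fun i _ => Finset.sum_congr rfl fun j _ => by
        by_cases h : i < j <;> simp [h, mul_comm]
    have hdiag : (∑ i : Fin n, ∑ j : Fin n, if i = j then X i * X j else 0) = S2 := by
      refine Finset.sum_congr rfl fun i _ => ?_
      rw [show (∑ j : Fin n, if i = j then X i * X j else 0)
          = ∑ j : Fin n, if j = i then X i * X j else 0 from
        Finset.sum_congr rfl fun j _ => by by_cases h : i = j <;> simp [h, eq_comm]]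
      rw [Finset.sum_ite_eq' univ i (fun j => X i * X j)]
      simp [sq]
    simp only [Finset.sum_add_distrib, hswap, hdiag]
    ring
  -- positivity of S2 - A^2
  have hnonneg : (0:ℝ) ≤ S2 - A ^ 2 := by
    rw [← hQ]
    exact Finset.sum_nonneg fun j _ => by positivity
  have hQpos : 0 < S2 - A ^ 2 := by
    rcases lt_or_eq_of_le hnonneg with h | h
    · exact h
    exfalso
    have hzero : ∀ j ∈ (univ : Finset (Fin n)),
        (if 1 ≤ (j : ℕ) then X j ^ 2 else 0) = 0 := by
      rw [← Finset.sum_eq_zero_iff_of_nonneg fun j _ => by positivity]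
      rw [hQ, ← h]
    have hXj : ∀ j : Fin n, j ≠ z → X j = 0 := by
      intro j hj
      have h1 : 1 ≤ (j : ℕ) := by
        rcases Nat.eq_zero_or_pos (j : ℕ) with h0 | h0
        · exact absurd (Fin.ext h0) hj
        · exact h0
      have := hzero j (Finset.mem_univ j)
      rw [if_pos h1] at this
      exact pow_eq_zero_iff (n := 2) (by norm_num) |>.mp this
    have hAz : A = 0 := by
      have : (∑ j : Fin n, if 1 ≤ (j : ℕ) then X j else 0) = 0 :=
        Finset.sum_eq_zero fun j _ => by
          by_cases hj : j = z
          · subst hj; simp [hz]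
          · simp [hXj j hj]
      rw [hT] at this; linarith
    apply hX
    funext j
    by_cases hj : j = z
    · subst hj; exact hAz
    · exact hXj j hj
  -- arithmetic finish
  have hc : (3:ℝ) ≤ (n:ℝ) := by exact_mod_cast hn
  have hc1 : (0:ℝ) < (n:ℝ) - 1 := by linarith
  unfold gOne
  rw [hT, hQ]
  have hA2 : 0 ≤ A ^ 2 := sq_nonneg A
  have hcr : (∑ i : Fin n, ∑ j : Fin n, if i < j then X i * X j else 0)
      = (0 - S2) / 2 := by rw [hsum] at hcross; linarith
  rw [hcr]
  have hAz : X ⟨0, by omega⟩ = A := rfl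
  rw [hAz]
  have hu0 : 0 < 1 / ((n:ℝ) - 1) := by positivity
  have hu : 1 / ((n:ℝ) - 1) ≤ 1 / 2 := by
    rw [div_le_div_iff₀ hc1 (by norm_num)]; linarith
  have h1 : (S2 - A ^ 2) * (1 / ((n:ℝ) - 1)) ≤ (S2 - A ^ 2) * (1 / 2) :=
    mul_le_mul_of_nonneg_left hu hQpos.le
  have h2 : A ^ 2 * (1 / ((n:ℝ) - 1)) ≤ A ^ 2 * (1 / 2) :=
    mul_le_mul_of_nonneg_left hu (sq_nonneg A)
  nlinarith [hQpos, sq_nonneg A]
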